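/- arXiv:2104.00003 — 2 statements merged into one kernel-verified Lean document; each statement's English description precedes it below -/
import Mathlib

section
/- (Faithfulness of the dynamical coherence measure.) Let C be a real-valued function on d×d complex matrices that is bounded on the set D of density matrices. Then for every quantum channel Θ one has 𝔠_C(Θ) ≥ 0, and 𝔠_C(Θ) = 0 if and only if Θ is a CMIO for C. -/
open Matrix ComplexOrder

/-- A density matrix: positive semidefinite with trace 1. -/
def IsDensity (d : ℕ) (ρ : Matrix (Fin d) (Fin d) ℂ) : Prop :=
  ρ.PosSemidef ∧ ρ.trace = 1

/-- A quantum channel: a map admitting a Kraus decomposition. -/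
def IsChannel (d : ℕ) (Λ : Matrix (Fin d) (Fin d) ℂ → Matrix (Fin d) (Fin d) ℂ) : Prop :=
  ∃ (m : ℕ) (K : Fin m → Matrix (Fin d) (Fin d) ℂ),
    (∀ ρ, Λ ρ = ∑ i, K i * ρ * (K i)ᴴ) ∧ (∑ i, (K i)ᴴ * K i) = 1

/-- A channel is an incoherent operation induced by the coherence measure `C` (CMIO for `C`)
if it does not increase `C` on any density matrix. -/
def IsCMIO (d : ℕ) (C : Matrix (Fin d) (Fin d) ℂ → ℝ)
    (Λ : Matrix (Fin d) (Fin d) ℂ → Matrix (Fin d) (Fin d) ℂ) : Prop :=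
  ∀ ρ, IsDensity d ρ → C (Λ ρ) ≤ C ρ

/-- `C` is bounded on the set of density matrices. -/
def BoundedOnD (d : ℕ) (C : Matrix (Fin d) (Fin d) ℂ → ℝ) : Prop :=
  ∃ M : ℝ, ∀ ρ, IsDensity d ρ → |C ρ| ≤ M

/-- `C` is convex on density matrices. -/
def ConvexOnD (d : ℕ) (C : Matrix (Fin d) (Fin d) ℂ → ℝ) : Prop :=
  ∀ t : ℝ, t ∈ Set.Icc (0 : ℝ) 1 → ∀ ρ σ : Matrix (Fin d) (Fin d) ℂ,
    IsDensity d ρ → IsDensity d σ →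
    C (t • ρ + (1 - t) • σ) ≤ t * C ρ + (1 - t) * C σ

/-- The power of the channel `Θ` over the channel `Λ`:
`P_C(Θ; Λ) = sup_{ρ ∈ D} (C(Θ(ρ)) − C(Λ(ρ)))`. -/
noncomputable def power (d : ℕ) (C : Matrix (Fin d) (Fin d) ℂ → ℝ)
    (Θ Λ : Matrix (Fin d) (Fin d) ℂ → Matrix (Fin d) (Fin d) ℂ) : ℝ :=
  sSup ((fun ρ => C (Θ ρ) - C (Λ ρ)) '' {ρ | IsDensity d ρ})

/-- The dynamical coherence measure `𝔠_C(Θ) = inf_{Λ channel, CMIO for C} |P_C(Θ; Λ)|`. -/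
noncomputable def dynCoh (d : ℕ) (C : Matrix (Fin d) (Fin d) ℂ → ℝ)
    (Θ : Matrix (Fin d) (Fin d) ℂ → Matrix (Fin d) (Fin d) ℂ) : ℝ :=
  sInf ((fun Λ => |power d C Θ Λ|) '' {Λ | IsChannel d Λ ∧ IsCMIO d C Λ})

/-! If `Θ` is a CMIO it competes in the infimum against itself, with power `0`. Conversely, for a
density matrix `ρ` every CMIO `Λ` has `C (Λ ρ) ≤ C ρ`, so the power of `Θ` over `Λ` is at least the
gain `C (Θ ρ) - C ρ`. Boundedness of `C` is what makes that supremum an upper bound (`sSup` of an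
unbounded set of reals is `0`), and the identity channel keeps the infimum over a nonempty set.
Hence `dynCoh` dominates every gain. -/

section

variable {d : ℕ}

lemma IsChannel.isDensity_apply {Λ : Matrix (Fin d) (Fin d) ℂ → Matrix (Fin d) (Fin d) ℂ}
    (hΛ : IsChannel d Λ) {ρ : Matrix (Fin d) (Fin d) ℂ} (hρ : IsDensity d ρ) :
    IsDensity d (Λ ρ) := by
  obtain ⟨m, K, hK, hsum⟩ := hΛ
  rw [hK]
  refine ⟨Matrix.posSemidef_sum _ fun i _ => hρ.1.mul_mul_conjTranspose_same (K i), ?_⟩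
  calc (∑ i, K i * ρ * (K i)ᴴ).trace = (∑ i, (K i)ᴴ * K i * ρ).trace := by
        simp only [Matrix.trace_sum]
        exact Finset.sum_congr rfl fun i _ => Matrix.trace_mul_cycle _ _ _
    _ = 1 := by rw [← Finset.sum_mul, hsum, one_mul, hρ.2]

lemma isChannel_id : IsChannel d id :=
  ⟨1, fun _ => 1, fun ρ => by simp, by simp⟩

lemma isCMIO_id (C : Matrix (Fin d) (Fin d) ℂ → ℝ) : IsCMIO d C id :=
  fun _ _ => le_rfl

lemma power_self (C : Matrix (Fin d) (Fin d) ℂ → ℝ)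
    (Θ : Matrix (Fin d) (Fin d) ℂ → Matrix (Fin d) (Fin d) ℂ) : power d C Θ Θ = 0 := by
  simp only [power, sub_self]
  rcases Set.eq_empty_or_nonempty {ρ | IsDensity d ρ} with h | h
  · simp [h]
  · rw [h.image_const, csSup_singleton]

lemma sub_le_power {C : Matrix (Fin d) (Fin d) ℂ → ℝ} (hC : BoundedOnD d C)
    {Θ Λ : Matrix (Fin d) (Fin d) ℂ → Matrix (Fin d) (Fin d) ℂ}
    (hΘ : IsChannel d Θ) (hΛ : IsChannel d Λ) {ρ : Matrix (Fin d) (Fin d) ℂ}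
    (hρ : IsDensity d ρ) : C (Θ ρ) - C (Λ ρ) ≤ power d C Θ Λ := by
  obtain ⟨M, hM⟩ := hC
  refine le_csSup ⟨M + M, ?_⟩ ⟨ρ, hρ, rfl⟩
  rintro _ ⟨σ, hσ, rfl⟩
  have hΘσ := abs_le.mp (hM _ (hΘ.isDensity_apply hσ))
  have hΛσ := abs_le.mp (hM _ (hΛ.isDensity_apply hσ))
  linarith [hΘσ.2, hΛσ.1]

lemma dynCoh_nonneg (C : Matrix (Fin d) (Fin d) ℂ → ℝ)
    (Θ : Matrix (Fin d) (Fin d) ℂ → Matrix (Fin d) (Fin d) ℂ) : 0 ≤ dynCoh d C Θ :=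
  Real.sInf_nonneg <| by
    rintro _ ⟨Λ, -, rfl⟩
    exact abs_nonneg _

lemma dynCoh_eq_zero_of_isCMIO {C : Matrix (Fin d) (Fin d) ℂ → ℝ}
    {Θ : Matrix (Fin d) (Fin d) ℂ → Matrix (Fin d) (Fin d) ℂ} (hΘ : IsChannel d Θ)
    (hCΘ : IsCMIO d C Θ) : dynCoh d C Θ = 0 := by
  refine le_antisymm ?_ (dynCoh_nonneg C Θ)
  calc dynCoh d C Θ ≤ |power d C Θ Θ| :=
        csInf_le ⟨0, by rintro _ ⟨Λ, -, rfl⟩; exact abs_nonneg _⟩ ⟨Θ, ⟨hΘ, hCΘ⟩, rfl⟩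
    _ = 0 := by rw [power_self, abs_zero]

lemma sub_le_dynCoh {C : Matrix (Fin d) (Fin d) ℂ → ℝ} (hC : BoundedOnD d C)
    {Θ : Matrix (Fin d) (Fin d) ℂ → Matrix (Fin d) (Fin d) ℂ} (hΘ : IsChannel d Θ)
    {ρ : Matrix (Fin d) (Fin d) ℂ} (hρ : IsDensity d ρ) :
    C (Θ ρ) - C ρ ≤ dynCoh d C Θ := by
  refine le_csInf ⟨_, id, ⟨isChannel_id, isCMIO_id C⟩, rfl⟩ ?_
  rintro _ ⟨Λ, ⟨hΛ, hCΛ⟩, rfl⟩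
  calc C (Θ ρ) - C ρ ≤ C (Θ ρ) - C (Λ ρ) := by linarith [hCΛ ρ hρ]
    _ ≤ power d C Θ Λ := sub_le_power hC hΘ hΛ hρ
    _ ≤ |power d C Θ Λ| := le_abs_self _

end

theorem stmt6 (d : ℕ) (C : Matrix (Fin d) (Fin d) ℂ → ℝ) (hb : BoundedOnD d C)
    (Θ : Matrix (Fin d) (Fin d) ℂ → Matrix (Fin d) (Fin d) ℂ) (hΘ : IsChannel d Θ) :
    0 ≤ dynCoh d C Θ ∧ (dynCoh d C Θ = 0 ↔ IsCMIO d C Θ) := by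
  refine ⟨dynCoh_nonneg C Θ, fun h ρ hρ => ?_, dynCoh_eq_zero_of_isCMIO hΘ⟩
  linarith [sub_le_dynCoh hb hΘ hρ]
end

section
/- Let ψ, ψ' be orthonormal vectors in ℂ², let λ ∈ [0,1], and set ρ = λ|ψ⟩⟨ψ| + (1−λ)|ψ'⟩⟨ψ'|. Then the relative entropy of POVM-based coherence satisfies 3/2 − h(λ)/2 ≤ C_{E,r}(ρ) ≤ 2 − h(λ); equivalently, 3/2 + h(λ)/2 ≤ H[{p_k(ρ)}] ≤ 2. -/
open Matrix ComplexOrder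

/-- The POVM vectors `|φ_k⟩ = (|0⟩ + i^k |1⟩)/√2` for `k = 0,1,2,3`. -/
noncomputable def phiv (k : Fin 4) : Fin 2 → ℂ :=
  ![(1 : ℂ) / Real.sqrt 2, Complex.I ^ (k : ℕ) / Real.sqrt 2]

/-- The outer product `|ψ⟩⟨ψ|`. -/
def outer (ψ : Fin 2 → ℂ) : Matrix (Fin 2) (Fin 2) ℂ :=
  vecMulVec ψ (star ψ)

/-- The POVM outcome probabilities `p_k(ρ) = (1/2)⟨φ_k|ρ|φ_k⟩`. -/
noncomputable def pk (ρ : Matrix (Fin 2) (Fin 2) ℂ) (k : Fin 4) : ℝ :=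
  (star (phiv k) ⬝ᵥ ρ.mulVec (phiv k)).re / 2

/-- `-x log₂ x`, with the convention `0 log₂ 0 = 0`. -/
noncomputable def ent2 (x : ℝ) : ℝ := -(x * Real.logb 2 x)

/-- The Shannon entropy (base 2) of the POVM outcome distribution of `ρ`. -/
noncomputable def H4 (ρ : Matrix (Fin 2) (Fin 2) ℂ) : ℝ := ∑ k : Fin 4, ent2 (pk ρ k)

/-- The binary entropy `h(λ)` (base 2). -/
noncomputable def binEnt (l : ℝ) : ℝ := ent2 l + ent2 (1 - l)

/-- A qubit density matrix: positive semidefinite with trace 1. -/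
def IsDensity2 (ρ : Matrix (Fin 2) (Fin 2) ℂ) : Prop :=
  ρ.PosSemidef ∧ ρ.trace = 1

/-!
Write `c = ρ 0 1` and `D t = (1 + t) log (1 + t) + (1 - t) log (1 - t)`. The four outcome
probabilities are `(1 ± 2 Re c) / 4` and `(1 ± 2 Im c) / 4`, so
`H = 2 - (D (2 Re c) + D (2 Im c)) / (4 log 2)`, while `h(λ) = 1 - D (2λ - 1) / (2 log 2)`.
Completeness of the orthonormal basis `{ψ, ψ'}` gives `ρ = (1 - λ) I + (2λ - 1) |ψ⟩⟨ψ|`, hence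
`4 |c|² ≤ (2λ - 1)²`. The upper bound is `D ≥ 0`. The lower bound is the superadditivity
`D a + D b ≤ D r` for `a² + b² ≤ r² ≤ 1`, which holds because `D t / t²` is increasing on `(0, 1]`.
-/

open Real Set ComplexConjugate

lemma le_of_hasDerivAt_nonneg {f f' : ℝ → ℝ} {a b t : ℝ}
    (hf : ∀ x ∈ Ico a b, HasDerivAt f (f' x) x) (hf' : ∀ x ∈ Ioo a b, 0 ≤ f' x)
    (ht : t ∈ Ico a b) : f a ≤ f t := by
  have hmono : MonotoneOn f (Ico a b) := by
    refine monotoneOn_of_hasDerivWithinAt_nonneg (convex_Ico a b)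
      (fun x hx => (hf x hx).continuousAt.continuousWithinAt)
      (fun x hx => (hf x (interior_subset hx)).hasDerivWithinAt) ?_
    simpa using hf'
  exact hmono (left_mem_Ico.2 (ht.1.trans_lt ht.2)) ht ht.1

/-- `klUniform t / 2` is the Kullback–Leibler divergence (in nats) of `((1 + t) / 2, (1 - t) / 2)`
from the uniform distribution on two points. -/
noncomputable def klUniform (t : ℝ) : ℝ := (1 + t) * log (1 + t) + (1 - t) * log (1 - t)

lemma klUniform_neg (t : ℝ) : klUniform (-t) = klUniform t := by
  rw [klUniform, klUniform, sub_neg_eq_add, ← sub_eq_add_neg, add_comm]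

lemma klUniform_abs (t : ℝ) : klUniform |t| = klUniform t := by
  rcases abs_choice t with h | h <;> rw [h]
  exact klUniform_neg t

lemma klUniform_nonneg {t : ℝ} (ht : |t| ≤ 1) : 0 ≤ klUniform t := by
  rw [abs_le] at ht
  have h₁ := self_sub_one_le_mul_log (x := 1 + t) (by linarith)
  have h₂ := self_sub_one_le_mul_log (x := 1 - t) (by linarith)
  rw [klUniform]
  linarith

lemma continuous_klUniform : Continuous klUniform :=
  (continuous_mul_log.comp (continuous_const.add continuous_id)).add
    (continuous_mul_log.comp (continuous_const.sub continuous_id))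

section Derivatives

variable {t : ℝ} (ht : t ∈ Ioo (-1) 1)
include ht

lemma hasDerivAt_log_one_add_sub_log_one_sub :
    HasDerivAt (fun x => log (1 + x) - log (1 - x)) (2 / (1 - t ^ 2)) t := by
  have h₁ : 1 + t ≠ 0 := by linarith [ht.1]
  have h₂ : 1 - t ≠ 0 := by linarith [ht.2]
  have h₃ : 1 - t ^ 2 ≠ 0 := by nlinarith [ht.1, ht.2]
  have h := (((hasDerivAt_id' t).const_add 1).log h₁).sub
    (((hasDerivAt_id' t).const_sub 1).log h₂)
  refine h.congr_deriv ?_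
  field_simp
  ring

lemma hasDerivAt_klUniform : HasDerivAt klUniform (log (1 + t) - log (1 - t)) t := by
  have h₁ : 1 + t ≠ 0 := by linarith [ht.1]
  have h₂ : 1 - t ≠ 0 := by linarith [ht.2]
  have h := (((hasDerivAt_id' t).const_add 1).mul (((hasDerivAt_id' t).const_add 1).log h₁)).add
    (((hasDerivAt_id' t).const_sub 1).mul (((hasDerivAt_id' t).const_sub 1).log h₂))
  refine h.congr_deriv ?_
  field_simp
  ring

end Derivatives

lemma log_one_add_sub_log_one_sub_le {t : ℝ} (ht : t ∈ Ico 0 1) :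
    log (1 + t) - log (1 - t) ≤ 2 * t / (1 - t ^ 2) := by
  have hderiv : ∀ x ∈ Ico (0 : ℝ) 1,
      HasDerivAt (fun x => 2 * x / (1 - x ^ 2) - (log (1 + x) - log (1 - x)))
        (4 * x ^ 2 / (1 - x ^ 2) ^ 2) x := by
    intro x hx
    have h₀ : 1 - x ^ 2 ≠ 0 := by nlinarith [hx.1, hx.2]
    refine ((((hasDerivAt_id' x).const_mul 2).div ((hasDerivAt_pow 2 x).const_sub 1) h₀).sub
      (hasDerivAt_log_one_add_sub_log_one_sub ⟨by linarith [hx.1], hx.2⟩)).congr_deriv ?_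
    field_simp
    ring
  have h := le_of_hasDerivAt_nonneg hderiv (fun x _ => by positivity) ht
  simp only [mul_zero, zero_div, add_zero, sub_zero, log_one, sub_self] at h
  linarith

lemma two_mul_klUniform_le {t : ℝ} (ht : t ∈ Ico 0 1) :
    2 * klUniform t ≤ t * (log (1 + t) - log (1 - t)) := by
  have hderiv : ∀ x ∈ Ico (0 : ℝ) 1,
      HasDerivAt (fun x => x * (log (1 + x) - log (1 - x)) - 2 * klUniform x)
        (2 * x / (1 - x ^ 2) - (log (1 + x) - log (1 - x))) x := by
    intro x hx
    have hx' : x ∈ Ioo (-1) 1 := ⟨by linarith [hx.1], hx.2⟩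
    refine (((hasDerivAt_id' x).mul (hasDerivAt_log_one_add_sub_log_one_sub hx')).sub
      ((hasDerivAt_klUniform hx').const_mul 2)).congr_deriv ?_
    ring
  have h := le_of_hasDerivAt_nonneg hderiv
    (fun x hx => sub_nonneg.2 (log_one_add_sub_log_one_sub_le (Ioo_subset_Ico_self hx))) ht
  simpa [klUniform] using h

lemma monotoneOn_klUniform_div_sq : MonotoneOn (fun t => klUniform t / t ^ 2) (Ioc 0 1) := by
  set f' := fun x => x * (x * (log (1 + x) - log (1 - x)) - 2 * klUniform x) / (x ^ 2) ^ 2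
  have hderiv : ∀ x ∈ Ioo (0 : ℝ) 1, HasDerivAt (fun t => klUniform t / t ^ 2) (f' x) x := by
    intro x hx
    refine ((hasDerivAt_klUniform ⟨by linarith [hx.1], hx.2⟩).div (hasDerivAt_pow 2 x)
      (pow_ne_zero 2 hx.1.ne')).congr_deriv ?_
    push_cast
    ring
  refine monotoneOn_of_hasDerivWithinAt_nonneg (f' := f') (convex_Ioc 0 1)
    (continuous_klUniform.continuousOn.div (continuousOn_pow 2)
      fun x hx => pow_ne_zero 2 hx.1.ne') ?_ ?_ <;> rw [interior_Ioc]
  · exact fun x hx => (hderiv x hx).hasDerivWithinAt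
  · intro x hx
    have := two_mul_klUniform_le (Ioo_subset_Ico_self hx)
    have := hx.1.le
    positivity

lemma sq_mul_klUniform_le {a r : ℝ} (ha : 0 ≤ a) (har : a ≤ r) (hr : r ≤ 1) :
    r ^ 2 * klUniform a ≤ a ^ 2 * klUniform r := by
  rcases ha.eq_or_lt with rfl | ha
  · simp [klUniform]
  have h := monotoneOn_klUniform_div_sq ⟨ha, har.trans hr⟩ ⟨ha.trans_le har, hr⟩ har
  rw [div_le_div_iff₀ (by positivity) (by nlinarith)] at h
  linarith

lemma klUniform_add_le {a b r : ℝ} (hab : a ^ 2 + b ^ 2 ≤ r ^ 2) (hr : |r| ≤ 1) :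
    klUniform a + klUniform b ≤ klUniform r := by
  rcases (abs_nonneg r).eq_or_lt with hr0 | hr0
  · have : r = 0 := abs_eq_zero.1 hr0.symm
    have ha : a = 0 := by nlinarith [sq_nonneg b]
    have hb : b = 0 := by nlinarith [sq_nonneg a]
    simp [this, ha, hb, klUniform]
  have ha := sq_mul_klUniform_le (abs_nonneg a) (sq_le_sq.1 (by nlinarith [sq_nonneg b])) hr
  have hb := sq_mul_klUniform_le (abs_nonneg b) (sq_le_sq.1 (by nlinarith [sq_nonneg a])) hr
  simp only [klUniform_abs, sq_abs] at ha hb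
  have hkr := klUniform_nonneg hr
  have : r ^ 2 * (klUniform a + klUniform b) ≤ r ^ 2 * klUniform r := by nlinarith
  exact le_of_mul_le_mul_left this (by rw [← sq_abs]; positivity)

lemma ent2_div (u : ℝ) {c : ℝ} (hc : c ≠ 0) :
    ent2 (u / c) = (u * log c - u * log u) / (c * log 2) := by
  rcases eq_or_ne u 0 with rfl | hu
  · simp [ent2]
  rw [ent2, logb, log_div hu hc]
  field_simp
  ring

lemma ent2_one_add_div_add_ent2_one_sub_div (t : ℝ) {c : ℝ} (hc : c ≠ 0) :
    ent2 ((1 + t) / c) + ent2 ((1 - t) / c) = (2 * log c - klUniform t) / (c * log 2) := by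
  rw [ent2_div _ hc, ent2_div _ hc, klUniform]
  ring

lemma binEnt_eq_one_sub (l : ℝ) : binEnt l = 1 - klUniform (2 * l - 1) / (2 * log 2) := by
  have h := ent2_one_add_div_add_ent2_one_sub_div (2 * l - 1) two_ne_zero
  rw [show (1 + (2 * l - 1)) / 2 = l by ring, show (1 - (2 * l - 1)) / 2 = 1 - l by ring] at h
  rw [binEnt, h]
  field_simp [(log_pos one_lt_two).ne']

lemma pk_eq_of_isHermitian {ρ : Matrix (Fin 2) (Fin 2) ℂ} (hρ : ρ.IsHermitian)
    (htr : ρ.trace = 1) (k : Fin 4) :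
    pk ρ k = (1 + 2 * (Complex.I ^ (k : ℕ) * ρ 0 1).re) / 4 := by
  have hω : conj (Complex.I ^ (k : ℕ)) * Complex.I ^ (k : ℕ) = 1 := by
    rw [← Complex.normSq_eq_conj_mul_self]
    simp
  have h10 : ρ 1 0 = conj (ρ 0 1) := (hρ.apply 1 0).symm
  have h2 : ((√2 : ℝ) : ℂ) ^ 2 = 2 := by norm_cast; simp
  rw [Matrix.trace_fin_two] at htr
  have hq : star (phiv k) ⬝ᵥ ρ *ᵥ phiv k = 1 / 2 +
      (Complex.I ^ (k : ℕ) * ρ 0 1 + conj (Complex.I ^ (k : ℕ) * ρ 0 1)) / 2 := by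
    simp only [phiv, dotProduct, Matrix.mulVec, Fin.sum_univ_two, Pi.star_apply,
      Matrix.cons_val_zero, Matrix.cons_val_one, Complex.star_def, map_div₀, Complex.conj_ofReal,
      map_one, map_mul, h10]
    field_simp
    rw [h2]
    linear_combination 2 * htr + 2 * ρ 1 1 * hω
  rw [pk, hq, Complex.add_conj,
    show (1 / 2 : ℂ) + ((2 * (Complex.I ^ (k : ℕ) * ρ 0 1).re : ℝ) : ℂ) / 2 =
      ((1 + 2 * (Complex.I ^ (k : ℕ) * ρ 0 1).re) / 2 : ℝ) by push_cast; ring,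
    Complex.ofReal_re]
  ring

lemma H4_eq_two_sub {ρ : Matrix (Fin 2) (Fin 2) ℂ} (hρ : ρ.IsHermitian) (htr : ρ.trace = 1) :
    H4 ρ = 2 - (klUniform (2 * (ρ 0 1).re) + klUniform (2 * (ρ 0 1).im)) / (4 * log 2) := by
  have hre := ent2_one_add_div_add_ent2_one_sub_div (2 * (ρ 0 1).re) four_ne_zero
  have him := ent2_one_add_div_add_ent2_one_sub_div (2 * (ρ 0 1).im) four_ne_zero
  have hlog4 : log 4 = 2 * log 2 := by
    rw [show (4 : ℝ) = 2 ^ 2 by norm_num, log_pow]; norm_num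
  rw [hlog4] at hre him
  rw [H4, Fin.sum_univ_four]
  simp only [pk_eq_of_isHermitian hρ htr, Fin.coe_ofNat_eq_mod, Nat.reduceMod, pow_zero, pow_succ, one_mul, Complex.mul_re,
    Complex.I_re, Complex.I_im, Complex.I_mul_I, zero_mul, zero_sub, neg_mul, mul_neg,
    Complex.neg_re, neg_neg, ← sub_eq_add_neg]
  have hL : log 2 ≠ 0 := (log_pos one_lt_two).ne'
  linear_combination (norm := skip) hre + him
  field_simp
  ring

lemma outer_add_outer_eq_one {ψ ψ' : Fin 2 → ℂ} (hψ : star ψ ⬝ᵥ ψ = 1)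
    (hψ' : star ψ' ⬝ᵥ ψ' = 1) (horth : star ψ ⬝ᵥ ψ' = 0) : outer ψ + outer ψ' = 1 := by
  have horth' : star ψ' ⬝ᵥ ψ = 0 := by
    rw [← star_star ψ, Matrix.star_dotProduct_star, horth, star_zero]
  set U : Matrix (Fin 2) (Fin 2) ℂ := (Matrix.of ![ψ, ψ'])ᵀ
  have hU : Uᴴ * U = 1 := by
    ext i j
    fin_cases i <;> fin_cases j
    exacts [hψ, horth, horth', hψ']
  have hU' : U * Uᴴ = 1 := mul_eq_one_comm.mp hU
  ext i j
  simpa [U, outer, Matrix.mul_apply, Matrix.vecMulVec_apply] using congrFun (congrFun hU' i) j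

lemma isHermitian_outer (ψ : Fin 2 → ℂ) : (outer ψ).IsHermitian :=
  (Matrix.posSemidef_vecMulVec_self_star ψ).isHermitian

lemma trace_outer (ψ : Fin 2 → ℂ) : (outer ψ).trace = star ψ ⬝ᵥ ψ := by
  rw [outer, Matrix.trace_vecMulVec, dotProduct_comm]

lemma normSq_add_normSq_of_star_dotProduct_self {ψ : Fin 2 → ℂ} (hψ : star ψ ⬝ᵥ ψ = 1) :
    Complex.normSq (ψ 0) + Complex.normSq (ψ 1) = 1 := by
  simpa [dotProduct, Complex.normSq_apply, mul_comm] using congrArg Complex.re hψ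

section Mixture

variable {ψ ψ' : Fin 2 → ℂ} (l : ℝ)

lemma isHermitian_mixture : (l • outer ψ + (1 - l) • outer ψ').IsHermitian :=
  ((isHermitian_outer ψ).smul (.all l)).add ((isHermitian_outer ψ').smul (.all (1 - l)))

variable (hψ : star ψ ⬝ᵥ ψ = 1) (hψ' : star ψ' ⬝ᵥ ψ' = 1)
include hψ hψ'

lemma trace_mixture : (l • outer ψ + (1 - l) • outer ψ').trace = 1 := by
  simp [trace_outer, hψ, hψ']

variable (horth : star ψ ⬝ᵥ ψ' = 0)
include horth

lemma mixture_apply_zero_one :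
    (l • outer ψ + (1 - l) • outer ψ') 0 1 = (2 * l - 1 : ℝ) * (ψ 0 * conj (ψ 1)) := by
  rw [eq_sub_of_add_eq' (outer_add_outer_eq_one hψ hψ' horth)]
  simp only [outer, Matrix.add_apply, Matrix.sub_apply, Matrix.smul_apply, Matrix.vecMulVec_apply,
    Matrix.one_apply_ne zero_ne_one, Pi.star_apply, Complex.star_def, Complex.real_smul]
  push_cast
  ring

lemma four_mul_normSq_mixture_apply_le :
    4 * Complex.normSq ((l • outer ψ + (1 - l) • outer ψ') 0 1) ≤ (2 * l - 1) ^ 2 := by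
  have h := normSq_add_normSq_of_star_dotProduct_self hψ
  rw [mixture_apply_zero_one l hψ hψ' horth, map_mul, map_mul, Complex.normSq_ofReal,
    Complex.normSq_conj]
  have h4 : 4 * (Complex.normSq (ψ 0) * Complex.normSq (ψ 1)) ≤ 1 := by
    nlinarith [sq_nonneg (Complex.normSq (ψ 0) - Complex.normSq (ψ 1))]
  nlinarith [mul_le_mul_of_nonneg_left h4 (sq_nonneg (2 * l - 1))]

end Mixture

theorem stmt13 (ψ ψ' : Fin 2 → ℂ) (hψ : star ψ ⬝ᵥ ψ = 1) (hψ' : star ψ' ⬝ᵥ ψ' = 1)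
    (horth : star ψ ⬝ᵥ ψ' = 0) (l : ℝ) (hl : l ∈ Set.Icc (0 : ℝ) 1)
    (ρ : Matrix (Fin 2) (Fin 2) ℂ) (hρ : ρ = l • outer ψ + (1 - l) • outer ψ') :
    (3 / 2 - binEnt l / 2 ≤ H4 ρ - binEnt l ∧ H4 ρ - binEnt l ≤ 2 - binEnt l) ∧
      (3 / 2 + binEnt l / 2 ≤ H4 ρ ∧ H4 ρ ≤ 2) := by
  set x := (ρ 0 1).re
  set y := (ρ 0 1).im
  have hr : |2 * l - 1| ≤ 1 := abs_le.2 ⟨by linarith [hl.1], by linarith [hl.2]⟩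
  have hxy : (2 * x) ^ 2 + (2 * y) ^ 2 ≤ (2 * l - 1) ^ 2 := by
    have h := four_mul_normSq_mixture_apply_le l hψ hψ' horth
    rw [← hρ, Complex.normSq_apply] at h
    linarith
  have hr' : (2 * l - 1) ^ 2 ≤ 1 := (sq_le_one_iff_abs_le_one _).2 hr
  have hx : |2 * x| ≤ 1 := (sq_le_one_iff_abs_le_one _).1 (by nlinarith [sq_nonneg (2 * y)])
  have hy : |2 * y| ≤ 1 := (sq_le_one_iff_abs_le_one _).1 (by nlinarith [sq_nonneg (2 * x)])
  have hH := H4_eq_two_sub (hρ ▸ isHermitian_mixture l) (hρ ▸ trace_mixture l hψ hψ')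
  have hL : 0 < 4 * log 2 := by have := log_pos one_lt_two; positivity
  have hB : binEnt l = 1 - 2 * (klUniform (2 * l - 1) / (4 * log 2)) := by
    rw [binEnt_eq_one_sub]; field_simp; ring
  have hlower := div_le_div_of_nonneg_right (klUniform_add_le hxy hr) hL.le
  have hupper := div_nonneg (add_nonneg (klUniform_nonneg hx) (klUniform_nonneg hy)) hL.le
  refine ⟨⟨?_, ?_⟩, ?_, ?_⟩ <;> linarith
end
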